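/- For the wheel graph W_n (the join of the cycle C_n with a single additional vertex): vs_{χ'}(W_3) = 2, and vs_{χ'}(W_n) = 1 for all n ≥ 4. -/

import Mathlib

open SimpleGraph

open scoped Classical ENNReal

/-- `H` is (isomorphic to) a subgraph of `G`. -/
def IsSubgraphOf {α β : Type} (H : SimpleGraph α) (G : SimpleGraph β) : Prop :=
  ∃ f : α ↪ β, ∀ u v : α, H.Adj u v → G.Adj (f u) (f v)

/-- The `ρ`-vertex stability number of `G`: the minimum number of vertices of `G`
whose removal results in a graph `H ⊆ G` with `ρ H ≠ ρ G` or with no edges. -/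
noncomputable def vsNum {V : Type} [Fintype V] [DecidableEq V]
    (ρ : ∀ (W : Type) [Fintype W] [DecidableEq W], SimpleGraph W → ℝ≥0∞)
    (G : SimpleGraph V) : ℕ :=
  sInf {n | ∃ S : Finset V, S.card = n ∧
    (ρ _ (G.induce (↑Sᶜ : Set V)) ≠ ρ _ G ∨ (G.induce (↑Sᶜ : Set V)).edgeSet = ∅)}

/-- `ρ` is monotone increasing: `H ⊆ G` implies `ρ H ≤ ρ G`. -/
def MonotoneIncrInv
    (ρ : ∀ (W : Type) [Fintype W] [DecidableEq W], SimpleGraph W → ℝ≥0∞) : Prop :=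
  ∀ (α β : Type) [Fintype α] [DecidableEq α] [Fintype β] [DecidableEq β]
    (H : SimpleGraph α) (G : SimpleGraph β), IsSubgraphOf H G → ρ _ H ≤ ρ _ G

/-- `ρ` is monotone decreasing: `H ⊆ G` implies `ρ H ≥ ρ G`. -/
def MonotoneDecrInv
    (ρ : ∀ (W : Type) [Fintype W] [DecidableEq W], SimpleGraph W → ℝ≥0∞) : Prop :=
  ∀ (α β : Type) [Fintype α] [DecidableEq α] [Fintype β] [DecidableEq β]
    (H : SimpleGraph α) (G : SimpleGraph β), IsSubgraphOf H G → ρ _ G ≤ ρ _ H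

/-- `ρ` is maxing: for disjoint graphs, `ρ (H₁ ∪ H₂) = max (ρ H₁) (ρ H₂)`. -/
def MaxingInv
    (ρ : ∀ (W : Type) [Fintype W] [DecidableEq W], SimpleGraph W → ℝ≥0∞) : Prop :=
  ∀ (α β : Type) [Fintype α] [DecidableEq α] [Fintype β] [DecidableEq β]
    (G : SimpleGraph α) (H : SimpleGraph β), ρ _ (G ⊕g H) = max (ρ _ G) (ρ _ H)

/-- The chromatic index: minimum number of colors in a proper edge coloring. -/
noncomputable def chromIndex {V : Type} (G : SimpleGraph V) : ℕ :=
  sInf {k | ∃ c : G.edgeSet → Fin k, ∀ e₁ e₂ : G.edgeSet, e₁ ≠ e₂ →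
    (∃ v, v ∈ (e₁ : Sym2 V) ∧ v ∈ (e₂ : Sym2 V)) → c e₁ ≠ c e₂}

/-- Maximum degree. -/
noncomputable def maxDeg {V : Type} [Fintype V] (G : SimpleGraph V) : ℕ :=
  Finset.univ.sup fun v => (G.neighborSet v).ncard

/-- Minimum degree. -/
noncomputable def minDeg {V : Type} [Fintype V] (G : SimpleGraph V) : ℕ :=
  sInf {d | ∃ v, (G.neighborSet v).ncard = d}

/-- The chromatic vertex stability number `vs_{χ'}(G)`. -/
noncomputable def vsChi {V : Type} [Fintype V] [DecidableEq V] (G : SimpleGraph V) : ℕ :=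
  if G.edgeSet = ∅ then 0 else
    sInf {n | ∃ S : Finset V, S.card = n ∧
      chromIndex (G.induce (↑Sᶜ : Set V)) ≠ chromIndex G}

/-- The `Δ`-vertex stability number `vs_Δ(G)`. -/
noncomputable def vsDelta {V : Type} [Fintype V] [DecidableEq V] (G : SimpleGraph V) : ℕ :=
  sInf {n | ∃ S : Finset V, S.card = n ∧
    (maxDeg (G.induce (↑Sᶜ : Set V)) ≠ maxDeg G ∨ (G.induce (↑Sᶜ : Set V)).edgeSet = ∅)}

/-- The `δ`-vertex stability number `vs_δ(G)`. -/
noncomputable def vsMinDeg {V : Type} [Fintype V] [DecidableEq V] (G : SimpleGraph V) : ℕ :=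
  sInf {n | ∃ S : Finset V, S.card = n ∧
    (minDeg (G.induce (↑Sᶜ : Set V)) ≠ minDeg G ∨ (G.induce (↑Sᶜ : Set V)).edgeSet = ∅)}

/-- `class G = χ'(G) - Δ(G) + 1 ∈ {1,2}`. -/
noncomputable def classInv {V : Type} [Fintype V] (G : SimpleGraph V) : ℕ :=
  chromIndex G - maxDeg G + 1

/-- The `class`-vertex stability number. -/
noncomputable def vsClass {V : Type} [Fintype V] [DecidableEq V] (G : SimpleGraph V) : ℕ :=
  sInf {n | ∃ S : Finset V, S.card = n ∧
    (classInv (G.induce (↑Sᶜ : Set V)) ≠ classInv G ∨ (G.induce (↑Sᶜ : Set V)).edgeSet = ∅)}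

/-- Number of connected components. -/
noncomputable def numComponents {V : Type} (G : SimpleGraph V) : ℕ :=
  Nat.card G.ConnectedComponent

/-- The `ω`-vertex stability number (ω = number of components). -/
noncomputable def vsOmega {V : Type} [Fintype V] [DecidableEq V] (G : SimpleGraph V) : ℕ :=
  sInf {n | ∃ S : Finset V, S.card = n ∧
    (numComponents (G.induce (↑Sᶜ : Set V)) ≠ numComponents G ∨
      (G.induce (↑Sᶜ : Set V)).edgeSet = ∅)}

/-- Vertex connectivity: minimum number of vertices whose removal yields a graph that is
not connected, or the single-vertex graph `K₁`. -/
noncomputable def kappa {V : Type} [Fintype V] [DecidableEq V] (G : SimpleGraph V) : ℕ :=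
  sInf {n | ∃ S : Finset V, S.card = n ∧
    (¬ (G.induce (↑Sᶜ : Set V)).Connected ∨ Fintype.card ↥(↑Sᶜ : Set V) = 1)}

/-- `γ(V_Δ)`: minimum size of a set `Γ` of vertices such that every vertex of maximum
degree has a neighbor in `Γ`. -/
noncomputable def gammaMaxDeg {V : Type} [Fintype V] [DecidableEq V] (G : SimpleGraph V) : ℕ :=
  sInf {n | ∃ Γ : Finset V, Γ.card = n ∧
    ∀ v : V, (G.neighborSet v).ncard = maxDeg G → ∃ u ∈ Γ, G.Adj u v}

/-- The wheel graph `W n`: cycle `C n` joined with one extra vertex. -/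
def wheelGraph (n : ℕ) : SimpleGraph (Option (Fin n)) :=
  SimpleGraph.fromRel (fun x y =>
    match x, y with
    | none, some _ => True
    | some i, some j => (j : ℕ) = ((i : ℕ) + 1) % n
    | _, _ => False)


/-! ### Auxiliary machinery -/

def ProperC {V : Type} (G : SimpleGraph V) (k : ℕ) : Prop :=
  ∃ c : G.edgeSet → Fin k, ∀ e₁ e₂ : G.edgeSet, e₁ ≠ e₂ →
    (∃ v, v ∈ (e₁ : Sym2 V) ∧ v ∈ (e₂ : Sym2 V)) → c e₁ ≠ c e₂

lemma chromIndex_def' {V : Type} (G : SimpleGraph V) :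
    chromIndex G = sInf {k | ProperC G k} := rfl

lemma properC_of {V : Type} (G : SimpleGraph V) (h : V → V → ℕ)
    (hsym : ∀ x y, h x y = h y x) (m : ℕ) (hm : 0 < m)
    (hlt : ∀ x y, G.Adj x y → h x y < m)
    (hne : ∀ v b c, G.Adj v b → G.Adj v c → b ≠ c → h v b ≠ h v c) :
    ProperC G m := by
  refine ⟨fun e => ⟨Sym2.lift ⟨h, hsym⟩ e.val % m, Nat.mod_lt _ hm⟩, ?_⟩
  rintro ⟨e₁, he₁⟩ ⟨e₂, he₂⟩ hne12 ⟨v, hv1, hv2⟩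
  obtain ⟨b, rfl⟩ := Sym2.mem_iff_exists.mp hv1
  obtain ⟨c, rfl⟩ := Sym2.mem_iff_exists.mp hv2
  have hb : G.Adj v b := he₁
  have hc : G.Adj v c := he₂
  have hbc : b ≠ c := by rintro rfl; exact hne12 rfl
  intro hcol
  have h1 : Sym2.lift ⟨h, hsym⟩ s(v, b) = h v b := by simp
  have h2 : Sym2.lift ⟨h, hsym⟩ s(v, c) = h v c := by simp
  simp only [Fin.mk.injEq, h1, h2, Nat.mod_eq_of_lt (hlt _ _ hb),
    Nat.mod_eq_of_lt (hlt _ _ hc)] at hcol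
  exact hne v b c hb hc hbc hcol

lemma chrom_lower {V : Type} (G : SimpleGraph V) (m : ℕ) (f : Fin m → G.edgeSet)
    (hinj : Function.Injective f)
    (hshare : ∀ i j, ∃ v, v ∈ (f i : Sym2 V) ∧ v ∈ (f j : Sym2 V)) :
    ∀ k, ProperC G k → m ≤ k := by
  intro k hk
  obtain ⟨c, hc⟩ := hk
  have : Function.Injective (fun i => c (f i)) := by
    intro i j hij
    by_contra hne
    exact hc (f i) (f j) (fun h => hne (hinj h)) (hshare i j) hij
  simpa using Fintype.card_le_of_injective _ this

lemma chromIndex_eq_of {V : Type} (G : SimpleGraph V) (m : ℕ)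
    (hupper : ProperC G m)
    (hlower : ∀ k, ProperC G k → m ≤ k) :
    chromIndex G = m := by
  rw [chromIndex_def']
  exact le_antisymm (Nat.sInf_le hupper) (le_csInf ⟨m, hupper⟩ hlower)

lemma properC_of_iso {V W : Type} {G : SimpleGraph V} {H : SimpleGraph W} (φ : G ≃g H)
    (k : ℕ) (h : ProperC H k) : ProperC G k := by
  obtain ⟨c, hc⟩ := h
  refine ⟨fun e => c (φ.mapEdgeSet e), ?_⟩
  intro e₁ e₂ hne ⟨v, hv1, hv2⟩
  apply hc
  · exact fun h => hne (φ.mapEdgeSet.injective h)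
  · have k1 : (φ.mapEdgeSet e₁ : Sym2 W) = Sym2.map φ (e₁ : Sym2 V) := rfl
    have k2 : (φ.mapEdgeSet e₂ : Sym2 W) = Sym2.map φ (e₂ : Sym2 V) := rfl
    exact ⟨φ v, k1 ▸ Sym2.mem_map.mpr ⟨v, hv1, rfl⟩, k2 ▸ Sym2.mem_map.mpr ⟨v, hv2, rfl⟩⟩

lemma chromIndex_iso {V W : Type} {G : SimpleGraph V} {H : SimpleGraph W} (φ : G ≃g H) :
    chromIndex G = chromIndex H := by
  rw [chromIndex_def', chromIndex_def']
  congr 1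
  ext k
  exact ⟨fun h => properC_of_iso φ.symm k h, fun h => properC_of_iso φ k h⟩

lemma add_mod_ne {n : ℕ} (k : ℕ) {s t : ℕ} (hs : s < n) (ht : t < n) (hst : s ≠ t) :
    (k + s) % n ≠ (k + t) % n := by
  intro h
  have h' : s ≡ t [MOD n] := Nat.ModEq.add_left_cancel' k h
  rw [Nat.ModEq, Nat.mod_eq_of_lt hs, Nat.mod_eq_of_lt ht] at h'
  exact hst h'

lemma spoke_ne' {m k t : ℕ} (hk : k < m) (h1 : 0 < t) (h2 : t < m) :
    k ≠ (k + t) % m := by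
  intro h
  apply add_mod_ne k (show 0 < m by omega) h2 (Nat.ne_of_lt h1)
  rw [Nat.add_zero, Nat.mod_eq_of_lt hk]
  exact h

lemma fin_eq_of_mod {n : ℕ} (i j : Fin n) (h : ((i:ℕ)+1) % n = ((j:ℕ)+1) % n) : i = j := by
  have h' : (i:ℕ) ≡ (j:ℕ) [MOD n] := Nat.ModEq.add_right_cancel' 1 h
  rw [Nat.ModEq, Nat.mod_eq_of_lt i.isLt, Nat.mod_eq_of_lt j.isLt] at h'
  exact Fin.ext h'

/-! ### Wheel graph adjacency -/

lemma wheel_adj_ns {n : ℕ} (j : Fin n) : (wheelGraph n).Adj none (some j) := by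
  simp [wheelGraph, SimpleGraph.fromRel_adj]

lemma wheel_adj_nn {n : ℕ} : ¬ (wheelGraph n).Adj none none := by
  simp

lemma wheel_adj_ss {n : ℕ} (i j : Fin n) : (wheelGraph n).Adj (some i) (some j) ↔
    i ≠ j ∧ ((j : ℕ) = ((i : ℕ) + 1) % n ∨ (i : ℕ) = ((j : ℕ) + 1) % n) := by
  simp [wheelGraph, SimpleGraph.fromRel_adj]

/-! ### Coloring of the wheel -/

def hW (n : ℕ) : Option (Fin n) → Option (Fin n) → ℕ
  | none, none => 0
  | none, some j => j
  | some j, none => j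
  | some i, some j =>
      if max (i : ℕ) (j : ℕ) = min (i : ℕ) (j : ℕ) + 1
      then (min (i : ℕ) (j : ℕ) + 2) % n else (max (i : ℕ) (j : ℕ) + 2) % n

lemma hW_symm (n : ℕ) : ∀ x y, hW n x y = hW n y x := by
  rintro (_|i) (_|j) <;> simp [hW, Nat.min_comm, Nat.max_comm]

lemma hW_lt {n : ℕ} (hn : 0 < n) : ∀ x y, (wheelGraph n).Adj x y → hW n x y < n := by
  rintro (_|i) (_|j) h
  · exact absurd h wheel_adj_nn
  · simpa [hW] using j.isLt
  · simpa [hW] using i.isLt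
  · simp only [hW]
    split <;> exact Nat.mod_lt _ hn

lemma hW_forward {n : ℕ} (hn : 3 ≤ n) (k j : Fin n) (h : (j : ℕ) = ((k : ℕ) + 1) % n) :
    hW n (some k) (some j) = ((k : ℕ) + 2) % n := by
  rcases Nat.lt_or_ge ((k : ℕ) + 1) n with hlt | hge
  · have hj : (j : ℕ) = (k : ℕ) + 1 := by rw [h, Nat.mod_eq_of_lt hlt]
    have hmin : min (k : ℕ) (j : ℕ) = (k : ℕ) := by omega
    have hmax : max (k : ℕ) (j : ℕ) = (k : ℕ) + 1 := by omega
    simp [hW, hmin, hmax]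
  · have hk : (k : ℕ) = n - 1 := by have := k.isLt; omega
    have hj : (j : ℕ) = 0 := by
      rw [h, hk]; have hh : n - 1 + 1 = n := by omega
      rw [hh, Nat.mod_self]
    have hmin : min (k : ℕ) (j : ℕ) = 0 := by omega
    have hmax : max (k : ℕ) (j : ℕ) = (k : ℕ) := by omega
    have hcond : ¬ (max (k : ℕ) (j : ℕ) = min (k : ℕ) (j : ℕ) + 1) := by omega
    simp only [hW]
    rw [if_neg hcond, hmax]

lemma hW_backward {n : ℕ} (hn : 3 ≤ n) (k j : Fin n) (h : (k : ℕ) = ((j : ℕ) + 1) % n) :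
    hW n (some k) (some j) = ((k : ℕ) + 1) % n := by
  rw [hW_symm, hW_forward hn j k h, h, Nat.mod_add_mod]

lemma spoke_ne {n : ℕ} (k : Fin n) {t : ℕ} (h1 : 0 < t) (h2 : t < n) :
    (k : ℕ) ≠ ((k : ℕ) + t) % n := spoke_ne' k.isLt h1 h2

lemma hW_ne {n : ℕ} (hn : 3 ≤ n) :
    ∀ v b c, (wheelGraph n).Adj v b → (wheelGraph n).Adj v c → b ≠ c →
      hW n v b ≠ hW n v c := by
  have h0 : (0:ℕ) < n := by omega
  have h1 : (1:ℕ) < n := by omega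
  have h2 : (2:ℕ) < n := by omega
  rintro (_|k) (_|i) (_|j) hb hc hbc
  · exact absurd rfl hbc
  · exact absurd hb wheel_adj_nn
  · exact absurd hc wheel_adj_nn
  · have : i ≠ j := fun h => hbc (by rw [h])
    simpa [hW] using fun h => this (Fin.ext h)
  · exact absurd rfl hbc
  · rcases (wheel_adj_ss k j).mp hc with ⟨-, hf | hb'⟩
    · rw [show hW n (some k) none = (k:ℕ) from rfl, hW_forward hn k j hf]
      exact spoke_ne k (by omega) h2
    · rw [show hW n (some k) none = (k:ℕ) from rfl, hW_backward hn k j hb']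
      exact spoke_ne k (by omega) h1
  · rcases (wheel_adj_ss k i).mp hb with ⟨-, hf | hb'⟩
    · rw [show hW n (some k) none = (k:ℕ) from rfl, hW_forward hn k i hf]
      exact (spoke_ne k (by omega) h2).symm
    · rw [show hW n (some k) none = (k:ℕ) from rfl, hW_backward hn k i hb']
      exact (spoke_ne k (by omega) h1).symm
  · have hij : i ≠ j := fun h => hbc (by rw [h])
    rcases (wheel_adj_ss k i).mp hb with ⟨-, hfi | hbi⟩ <;>
      rcases (wheel_adj_ss k j).mp hc with ⟨-, hfj | hbj⟩
    · exact absurd (Fin.ext (hfi.trans hfj.symm)) hij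
    · rw [hW_forward hn k i hfi, hW_backward hn k j hbj]
      exact add_mod_ne _ h2 h1 (by omega)
    · rw [hW_backward hn k i hbi, hW_forward hn k j hfj]
      exact add_mod_ne _ h1 h2 (by omega)
    · exact absurd (fin_eq_of_mod i j (hbi.symm.trans hbj)) hij

lemma chromIndex_wheel {n : ℕ} (hn : 3 ≤ n) : chromIndex (wheelGraph n) = n := by
  apply chromIndex_eq_of
  · exact properC_of _ (hW n) (hW_symm n) n (by omega) (hW_lt (by omega)) (hW_ne hn)
  · refine chrom_lower _ n (fun i => ⟨s(none, some i), (wheel_adj_ns i : _)⟩) ?_ ?_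
    · intro i j h
      have : s(none, some i) = (s(none, some j) : Sym2 (Option (Fin n))) :=
        congrArg Subtype.val h
      have := Sym2.congr_right.mp this
      exact Option.some_injective _ this
    · intro i j
      exact ⟨none, Sym2.mem_mk_left _ _, Sym2.mem_mk_left _ _⟩

/-! ### Coloring of the fan (wheel minus one rim vertex) -/

def hF (n : ℕ) : Option (Fin n) → Option (Fin n) → ℕ
  | none, none => 0
  | none, some j => j
  | some j, none => j
  | some i, some j => (min (i : ℕ) (j : ℕ) + 2) % (n - 1)

lemma hF_symm (n : ℕ) : ∀ x y, hF n x y = hF n y x := by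
  rintro (_|i) (_|j) <;> simp [hF, Nat.min_comm]

lemma fan_edge {n : ℕ} (hn : 4 ≤ n) (i j : Fin n) (hi : (i : ℕ) ≠ n - 1)
    (hj : (j : ℕ) ≠ n - 1) (h : (j : ℕ) = ((i : ℕ) + 1) % n) :
    (j : ℕ) = (i : ℕ) + 1 ∧ (i : ℕ) ≤ n - 3 := by
  have hi' := i.isLt
  have hj' := j.isLt
  rcases Nat.lt_or_ge ((i : ℕ) + 1) n with hlt | hge
  · rw [Nat.mod_eq_of_lt hlt] at h; omega
  · exfalso; have : (i:ℕ) = n - 1 := by omega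
    exact hi this

lemma hF_ne {n : ℕ} (hn : 4 ≤ n) (v b c : Option (Fin n))
    (hv : ∀ i : Fin n, v = some i → (i : ℕ) ≠ n - 1)
    (hb : ∀ i : Fin n, b = some i → (i : ℕ) ≠ n - 1)
    (hc : ∀ i : Fin n, c = some i → (i : ℕ) ≠ n - 1)
    (hab : (wheelGraph n).Adj v b) (hac : (wheelGraph n).Adj v c) (hbc : b ≠ c) :
    hF n v b ≠ hF n v c := by
  have h1 : (1:ℕ) < n - 1 := by omega
  have h2 : (2:ℕ) < n - 1 := by omega
  obtain _|k := v <;> obtain _|i := b <;> obtain _|j := c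
  · exact absurd rfl hbc
  · exact absurd hab (by simp [wheelGraph])
  · exact absurd hac (by simp [wheelGraph])
  · have : i ≠ j := fun h => hbc (by rw [h])
    simpa [hF] using fun h => this (Fin.ext h)
  · exact absurd rfl hbc
  · have hk : (k:ℕ) ≠ n - 1 := hv k rfl
    have hj : (j:ℕ) ≠ n - 1 := hc j rfl
    have hkn : (k:ℕ) < n - 1 := by have := k.isLt; omega
    rcases (wheel_adj_ss k j).mp hac with ⟨-, hf | hb'⟩
    · obtain ⟨he, hle⟩ := fan_edge hn k j hk hj hf
      have hmin : min (k:ℕ) (j:ℕ) = (k:ℕ) := by omega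
      show (k:ℕ) ≠ (min (k:ℕ) (j:ℕ) + 2) % (n-1)
      rw [hmin]
      exact spoke_ne' hkn (by omega) h2
    · obtain ⟨he, hle⟩ := fan_edge hn j k hj hk hb'
      have hmin : min (k:ℕ) (j:ℕ) = (j:ℕ) := by omega
      have he2 : (j:ℕ) + 2 = (k:ℕ) + 1 := by omega
      show (k:ℕ) ≠ (min (k:ℕ) (j:ℕ) + 2) % (n-1)
      rw [hmin, he2]
      exact spoke_ne' hkn (by omega) h1
  · have hk : (k:ℕ) ≠ n - 1 := hv k rfl
    have hi : (i:ℕ) ≠ n - 1 := hb i rfl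
    have hkn : (k:ℕ) < n - 1 := by have := k.isLt; omega
    rcases (wheel_adj_ss k i).mp hab with ⟨-, hf | hb'⟩
    · obtain ⟨he, hle⟩ := fan_edge hn k i hk hi hf
      have hmin : min (k:ℕ) (i:ℕ) = (k:ℕ) := by omega
      show (min (k:ℕ) (i:ℕ) + 2) % (n-1) ≠ (k:ℕ)
      rw [hmin]
      exact (spoke_ne' hkn (by omega) h2).symm
    · obtain ⟨he, hle⟩ := fan_edge hn i k hi hk hb'
      have hmin : min (k:ℕ) (i:ℕ) = (i:ℕ) := by omega
      have he2 : (i:ℕ) + 2 = (k:ℕ) + 1 := by omega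
      show (min (k:ℕ) (i:ℕ) + 2) % (n-1) ≠ (k:ℕ)
      rw [hmin, he2]
      exact (spoke_ne' hkn (by omega) h1).symm
  · have hk : (k:ℕ) ≠ n - 1 := hv k rfl
    have hi : (i:ℕ) ≠ n - 1 := hb i rfl
    have hj : (j:ℕ) ≠ n - 1 := hc j rfl
    have hij : i ≠ j := fun h => hbc (by rw [h])
    show (min (k:ℕ) (i:ℕ) + 2) % (n-1) ≠ (min (k:ℕ) (j:ℕ) + 2) % (n-1)
    rcases (wheel_adj_ss k i).mp hab with ⟨-, hfi | hbi⟩ <;>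
      rcases (wheel_adj_ss k j).mp hac with ⟨-, hfj | hbj⟩
    · obtain ⟨he1, -⟩ := fan_edge hn k i hk hi hfi
      obtain ⟨he2, -⟩ := fan_edge hn k j hk hj hfj
      exact absurd (Fin.ext (by omega : (i:ℕ) = (j:ℕ))) hij
    · obtain ⟨he1, hl1⟩ := fan_edge hn k i hk hi hfi
      obtain ⟨he2, hl2⟩ := fan_edge hn j k hj hk hbj
      have m1 : min (k:ℕ) (i:ℕ) = (k:ℕ) := by omega
      have m2 : min (k:ℕ) (j:ℕ) = (j:ℕ) := by omega
      have e2 : (j:ℕ) + 2 = (k:ℕ) + 1 := by omega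
      rw [m1, m2, e2]
      exact add_mod_ne _ h2 h1 (by omega)
    · obtain ⟨he1, hl1⟩ := fan_edge hn i k hi hk hbi
      obtain ⟨he2, hl2⟩ := fan_edge hn k j hk hj hfj
      have m1 : min (k:ℕ) (i:ℕ) = (i:ℕ) := by omega
      have m2 : min (k:ℕ) (j:ℕ) = (k:ℕ) := by omega
      have e1 : (i:ℕ) + 2 = (k:ℕ) + 1 := by omega
      rw [m1, m2, e1]
      exact add_mod_ne _ h1 h2 (by omega)
    · obtain ⟨he1, -⟩ := fan_edge hn i k hi hk hbi
      obtain ⟨he2, -⟩ := fan_edge hn j k hj hk hbj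
      exact absurd (Fin.ext (by omega : (i:ℕ) = (j:ℕ))) hij

lemma chromIndex_fan {n : ℕ} (hn : 4 ≤ n) :
    chromIndex ((wheelGraph n).induce
      ((↑(({some ⟨n-1, by omega⟩} : Finset (Option (Fin n)))ᶜ)) : Set (Option (Fin n))))
      = n - 1 := by
  set S : Finset (Option (Fin n)) := {some ⟨n-1, by omega⟩} with hS
  have hmem : ∀ x : Option (Fin n), x ∈ ((↑(Sᶜ)) : Set (Option (Fin n))) ↔
      x ≠ some ⟨n-1, by omega⟩ := by
    intro x; simp [hS]
  apply chromIndex_eq_of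
  · refine properC_of _ (fun a b => hF n a.1 b.1)
      (fun a b => hF_symm n a.1 b.1) (n-1) (by omega) ?_ ?_
    · rintro ⟨_|i, hx⟩ ⟨_|j, hy⟩ hxy
      · exact absurd hxy wheel_adj_nn
      · have : (j:ℕ) ≠ n - 1 := fun h => (hmem _ |>.mp hy) (by
          exact congrArg some (Fin.ext h))
        have := j.isLt
        simp only [hF]
        omega
      · have : (i:ℕ) ≠ n - 1 := fun h => (hmem _ |>.mp hx) (by
          exact congrArg some (Fin.ext h))
        have := i.isLt
        simp only [hF]
        omega
      · simp only [hF]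
        exact Nat.mod_lt _ (by omega)
    · intro v b c hvb hvc hbc
      refine hF_ne hn v.1 b.1 c.1 ?_ ?_ ?_ hvb hvc ?_
      · intro i hi h
        exact (hmem _ |>.mp v.2) (hi.trans (congrArg some (Fin.ext h)))
      · intro i hi h
        exact (hmem _ |>.mp b.2) (hi.trans (congrArg some (Fin.ext h)))
      · intro i hi h
        exact (hmem _ |>.mp c.2) (hi.trans (congrArg some (Fin.ext h)))
      · intro h
        exact hbc (Subtype.ext h)
  · have hubmem : (none : Option (Fin n)) ∈ ((↑(Sᶜ)) : Set (Option (Fin n))) :=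
      (hmem none).mpr (by simp)
    have vmem : ∀ i : Fin (n-1), (some ⟨(i:ℕ), by have := i.isLt; omega⟩ : Option (Fin n))
        ∈ ((↑(Sᶜ)) : Set (Option (Fin n))) := by
      intro i
      refine (hmem _).mpr ?_
      intro h
      have := i.isLt
      have h2 := congrArg (fun x => (Option.getD x ⟨0, by omega⟩ : Fin n)) h
      simp at h2
      omega
    refine chrom_lower _ (n-1)
      (fun i => ⟨s(⟨none, hubmem⟩, ⟨some ⟨(i:ℕ), by have := i.isLt; omega⟩, vmem i⟩),
        (wheel_adj_ns _ : _)⟩) ?_ ?_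
    · intro i j h
      have h1 := congrArg Subtype.val h
      have h2 := Sym2.congr_right.mp h1
      have h3 := congrArg Subtype.val h2
      simp only [Option.some.injEq] at h3
      have h4 := congrArg Fin.val h3
      exact Fin.ext h4
    · intro i j
      exact ⟨⟨none, hubmem⟩, Sym2.mem_mk_left _ _, Sym2.mem_mk_left _ _⟩

/-! ### W₃ specifics -/

def h3 : Option (Fin 3) → Option (Fin 3) → ℕ
  | none, none => 0
  | none, some j => j
  | some j, none => j
  | some i, some j => 3 - ((i:ℕ) + (j:ℕ))

lemma h3_symm : ∀ x y, h3 x y = h3 y x := by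
  rintro (_|i) (_|j) <;> simp [h3, Nat.add_comm]

def R3 : Option (Fin 3) → Option (Fin 3) → Bool
  | none, some _ => true
  | some i, some j => decide ((j:ℕ) = ((i:ℕ)+1)%3)
  | _, _ => false

lemma wheel3_adj (x y : Option (Fin 3)) :
    (wheelGraph 3).Adj x y ↔ x ≠ y ∧ (R3 x y = true ∨ R3 y x = true) := by
  rcases x with _|i <;> rcases y with _|j <;>
    simp [wheelGraph, SimpleGraph.fromRel_adj, R3]

lemma h3_ne_dec : ∀ v b c : Option (Fin 3),
    (v ≠ b ∧ (R3 v b = true ∨ R3 b v = true)) →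
    (v ≠ c ∧ (R3 v c = true ∨ R3 c v = true)) → b ≠ c → h3 v b ≠ h3 v c := by decide

lemma h3_lt_dec : ∀ x y : Option (Fin 3),
    (x ≠ y ∧ (R3 x y = true ∨ R3 y x = true)) → h3 x y < 3 := by decide

lemma properC3 (s : Set (Option (Fin 3))) : ProperC ((wheelGraph 3).induce s) 3 := by
  refine properC_of _ (fun a b => h3 a.1 b.1) (fun a b => h3_symm a.1 b.1) 3 (by norm_num)
    ?_ ?_
  · intro x y hxy
    exact h3_lt_dec _ _ ((wheel3_adj _ _).mp hxy)
  · intro v b c hb hc hbc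
    exact h3_ne_dec v.1 b.1 c.1 ((wheel3_adj _ _).mp hb) ((wheel3_adj _ _).mp hc)
      (fun h => hbc (Subtype.ext h))

lemma triangle_lower {V : Type} (G : SimpleGraph V) (A B C : V)
    (hAB : G.Adj A B) (hAC : G.Adj A C) (hBC : G.Adj B C) :
    ∀ k, ProperC G k → 3 ≤ k := by
  have h1 : A ≠ B := hAB.ne
  have h2 : A ≠ C := hAC.ne
  have h3 : B ≠ C := hBC.ne
  have h1' : B ≠ A := h1.symm
  have h2' : C ≠ A := h2.symm
  have h3' : C ≠ B := h3.symm
  apply chrom_lower G 3 ![⟨s(A,B), hAB⟩, ⟨s(A,C), hAC⟩, ⟨s(B,C), hBC⟩]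
  · intro i j h
    fin_cases i <;> fin_cases j <;> simp_all [Subtype.mk.injEq, Sym2.eq_iff] <;>
      exact absurd (congrArg Subtype.val h) (by simp [Sym2.eq_iff, h1, h2, h3, h1', h2', h3'])
  · intro i j
    fin_cases i <;> fin_cases j
    · exact ⟨A, Sym2.mem_mk_left _ _, Sym2.mem_mk_left _ _⟩
    · exact ⟨A, Sym2.mem_mk_left _ _, Sym2.mem_mk_left _ _⟩
    · exact ⟨B, Sym2.mem_mk_right _ _, Sym2.mem_mk_left _ _⟩
    · exact ⟨A, Sym2.mem_mk_left _ _, Sym2.mem_mk_left _ _⟩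
    · exact ⟨A, Sym2.mem_mk_left _ _, Sym2.mem_mk_left _ _⟩
    · exact ⟨C, Sym2.mem_mk_right _ _, Sym2.mem_mk_right _ _⟩
    · exact ⟨B, Sym2.mem_mk_left _ _, Sym2.mem_mk_right _ _⟩
    · exact ⟨C, Sym2.mem_mk_right _ _, Sym2.mem_mk_right _ _⟩
    · exact ⟨B, Sym2.mem_mk_left _ _, Sym2.mem_mk_left _ _⟩

lemma chrom3_remove_one (S : Finset (Option (Fin 3))) (hS : S.card = 1) :
    chromIndex ((wheelGraph 3).induce ((↑(Sᶜ)) : Set (Option (Fin 3)))) = 3 := by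
  obtain ⟨x, rfl⟩ := Finset.card_eq_one.mp hS
  have adj : ∀ (a b : Option (Fin 3)), (a ≠ b ∧ (R3 a b = true ∨ R3 b a = true)) →
      (wheelGraph 3).Adj a b := fun a b h => (wheel3_adj a b).mpr h
  have memc : ∀ (a : Option (Fin 3)), a ≠ x →
      a ∈ ((↑(({x} : Finset (Option (Fin 3)))ᶜ)) : Set (Option (Fin 3))) := by
    intro a ha
    simpa using ha
  rcases x with _|i
  · refine chromIndex_eq_of _ 3 (properC3 _) ?_
    exact triangle_lower _ ⟨some 0, memc _ (by decide)⟩ ⟨some 1, memc _ (by decide)⟩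
      ⟨some 2, memc _ (by decide)⟩ (adj (some 0) (some 1) (by decide))
      (adj (some 0) (some 2) (by decide)) (adj (some 1) (some 2) (by decide))
  · fin_cases i
    · refine chromIndex_eq_of _ 3 (properC3 _) ?_
      exact triangle_lower _ ⟨none, memc _ (by decide)⟩ ⟨some 1, memc _ (by decide)⟩
        ⟨some 2, memc _ (by decide)⟩ (adj none (some 1) (by decide))
        (adj none (some 2) (by decide)) (adj (some 1) (some 2) (by decide))
    · refine chromIndex_eq_of _ 3 (properC3 _) ?_
      exact triangle_lower _ ⟨none, memc _ (by decide)⟩ ⟨some 0, memc _ (by decide)⟩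
        ⟨some 2, memc _ (by decide)⟩ (adj none (some 0) (by decide))
        (adj none (some 2) (by decide)) (adj (some 0) (some 2) (by decide))
    · refine chromIndex_eq_of _ 3 (properC3 _) ?_
      exact triangle_lower _ ⟨none, memc _ (by decide)⟩ ⟨some 0, memc _ (by decide)⟩
        ⟨some 1, memc _ (by decide)⟩ (adj none (some 0) (by decide))
        (adj none (some 1) (by decide)) (adj (some 0) (some 1) (by decide))

lemma chrom3_remove_two :
    chromIndex ((wheelGraph 3).induce
      ((↑((({some 1, some 2} : Finset (Option (Fin 3))))ᶜ)) : Set (Option (Fin 3)))) = 1 := by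
  set s : Set (Option (Fin 3)) :=
    ((↑((({some 1, some 2} : Finset (Option (Fin 3))))ᶜ)) : Set (Option (Fin 3))) with hs
  have hmem2 : ∀ y : Option (Fin 3), y ∈ s ↔ (y = none ∨ y = some 0) := by
    intro y
    rw [hs]
    rcases y with _|i
    · simp
    · fin_cases i <;> simp
  have hub_mem : (none : Option (Fin 3)) ∈ s := (hmem2 none).mpr (Or.inl rfl)
  have v0_mem : (some 0 : Option (Fin 3)) ∈ s := (hmem2 _).mpr (Or.inr rfl)
  have hadj : ((wheelGraph 3).induce s).Adj ⟨none, hub_mem⟩ ⟨some 0, v0_mem⟩ :=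
    wheel_adj_ns 0
  have key : ∀ (a b : ↥s), ((wheelGraph 3).induce s).Adj a b →
      (a.1 = none ∧ b.1 = some 0) ∨ (a.1 = some 0 ∧ b.1 = none) := by
    rintro ⟨a, ha⟩ ⟨b, hb⟩ hab
    have hne : a ≠ b := SimpleGraph.Adj.ne (G := wheelGraph 3) hab
    rcases (hmem2 a).mp ha with h1 | h1 <;> rcases (hmem2 b).mp hb with h2 | h2 <;>
      subst h1 <;> subst h2
    · exact absurd rfl hne
    · exact Or.inl ⟨rfl, rfl⟩
    · exact Or.inr ⟨rfl, rfl⟩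
    · exact absurd rfl hne
  have alledges : ∀ z1 z2 : Sym2 ↥s, z1 ∈ ((wheelGraph 3).induce s).edgeSet →
      z2 ∈ ((wheelGraph 3).induce s).edgeSet → z1 = z2 := by
    intro z1 z2
    refine Sym2.inductionOn₂ z1 z2 ?_
    intro a b c d hz1 hz2
    obtain ⟨h1, h2⟩ | ⟨h1, h2⟩ := key a b hz1 <;>
      obtain ⟨h3, h4⟩ | ⟨h3, h4⟩ := key c d hz2
    · rw [show a = c from Subtype.ext (h1.trans h3.symm),
        show b = d from Subtype.ext (h2.trans h4.symm)]
    · rw [show a = d from Subtype.ext (h1.trans h4.symm),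
        show b = c from Subtype.ext (h2.trans h3.symm), Sym2.eq_swap]
    · rw [show a = d from Subtype.ext (h1.trans h4.symm),
        show b = c from Subtype.ext (h2.trans h3.symm), Sym2.eq_swap]
    · rw [show a = c from Subtype.ext (h1.trans h3.symm),
        show b = d from Subtype.ext (h2.trans h4.symm)]
  apply chromIndex_eq_of _ 1
  · refine ⟨fun _ => 0, ?_⟩
    intro e1 e2 hne _
    exact absurd (Subtype.ext (alledges e1.1 e2.1 e1.2 e2.2)) hne
  · intro k hk
    rcases k with _|k
    · obtain ⟨c, -⟩ := hk
      exact (c ⟨s(⟨none, hub_mem⟩, ⟨some 0, v0_mem⟩), hadj⟩).elim0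
    · omega

lemma chromIndex_induce_univ {V : Type} [Fintype V] [DecidableEq V] (G : SimpleGraph V) :
    chromIndex (G.induce ((↑((∅ : Finset V)ᶜ)) : Set V)) = chromIndex G := by
  have hset : ((↑((∅ : Finset V)ᶜ)) : Set V) = Set.univ := by simp
  rw [hset]
  exact chromIndex_iso (induceUnivIso G)

lemma wheel_edge_nonempty {n : ℕ} (hn : 0 < n) : (wheelGraph n).edgeSet ≠ ∅ := by
  intro h
  have : s(none, some (⟨0, hn⟩ : Fin n)) ∈ (wheelGraph n).edgeSet := wheel_adj_ns _
  rw [h] at this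
  exact this

/-- `vs_{χ'}(W_3) = 2` and `vs_{χ'}(W_n) = 1` for `n ≥ 4`. -/
theorem vs_wheelGraph :
    vsChi (wheelGraph 3) = 2 ∧ ∀ n : ℕ, 4 ≤ n → vsChi (wheelGraph n) = 1 := by
  constructor
  · unfold vsChi
    rw [if_neg (wheel_edge_nonempty (by norm_num))]
    have hW3 : chromIndex (wheelGraph 3) = 3 := chromIndex_wheel (by norm_num)
    have mem2 : (2:ℕ) ∈ {m | ∃ S : Finset (Option (Fin 3)), S.card = m ∧
        chromIndex ((wheelGraph 3).induce ((↑(Sᶜ)) : Set (Option (Fin 3)))) ≠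
          chromIndex (wheelGraph 3)} := by
      refine ⟨{some 1, some 2}, by decide, ?_⟩
      rw [chrom3_remove_two, hW3]
      omega
    have hlow : ∀ k ∈ {m | ∃ S : Finset (Option (Fin 3)), S.card = m ∧
        chromIndex ((wheelGraph 3).induce ((↑(Sᶜ)) : Set (Option (Fin 3)))) ≠
          chromIndex (wheelGraph 3)}, 2 ≤ k := by
      rintro k ⟨S, hcard, hne⟩
      match k with
      | 0 =>
        rw [Finset.card_eq_zero.mp hcard] at hne
        exact absurd (chromIndex_induce_univ _) hne
      | 1 =>
        rw [chrom3_remove_one S hcard, hW3] at hne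
        exact absurd rfl hne
      | (k+2) => omega
    exact le_antisymm (Nat.sInf_le mem2) (le_csInf ⟨2, mem2⟩ hlow)
  · intro n hn
    unfold vsChi
    rw [if_neg (wheel_edge_nonempty (by omega))]
    have hWn : chromIndex (wheelGraph n) = n := chromIndex_wheel (by omega)
    have mem1 : (1:ℕ) ∈ {m | ∃ S : Finset (Option (Fin n)), S.card = m ∧
        chromIndex ((wheelGraph n).induce ((↑(Sᶜ)) : Set (Option (Fin n)))) ≠
          chromIndex (wheelGraph n)} := by
      refine ⟨{some ⟨n-1, by omega⟩}, Finset.card_singleton _, ?_⟩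
      rw [chromIndex_fan hn, hWn]
      omega
    have hlow : ∀ k ∈ {m | ∃ S : Finset (Option (Fin n)), S.card = m ∧
        chromIndex ((wheelGraph n).induce ((↑(Sᶜ)) : Set (Option (Fin n)))) ≠
          chromIndex (wheelGraph n)}, 1 ≤ k := by
      rintro k ⟨S, hcard, hne⟩
      match k with
      | 0 =>
        rw [Finset.card_eq_zero.mp hcard] at hne
        exact absurd (chromIndex_induce_univ _) hne
      | (k+1) => omega
    exact le_antisymm (Nat.sInf_le mem1) (le_csInf ⟨1, mem1⟩ hlow)
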